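/- arXiv:1409.7163 — 2 statements merged into one kernel-verified Lean document; each statement's English description precedes it below -/
import Mathlib

section
/- With the setup of Theorem 3 (d_S = 1 + ⌊B(n_t − R/M)⌋, b̂ = ⌊d_S/n_t⌋, a_b = 1 for b ≤ u, a_b = a_{b−1} + n_t·n_r·min(δ, a_{b−u}) for b > u, d(R,δ) = n_r·n_t·∑_{b=1}^{b̂} a_b + n_r·(d_S − b̂·n_t)·a_{b̂+1}), causal CSIT provides a strict diversity gain over no CSIT, i.e. d(R,δ) > n_r·d_S for some δ > 0, if and only if R ≤ ((B−u)/B)·M·n_t (equivalently d_S > u·n_t). -/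
/-- Theorem 3 recursion: `a_b = 1` for `b ≤ u`, `a_b = a_{b−1} + c·min(δ, a_{b−u})`
for `b > u`, with `c = n_t·n_r`. -/
noncomputable def aT3 (u : ℕ) (c δ : ℝ) : ℕ → ℝ
  | 0 => 1
  | b + 1 =>
    if b + 1 ≤ u then 1
    else aT3 u c δ b + c * min δ (aT3 u c δ (b - (u - 1)))
termination_by b => b
decreasing_by all_goals omega

/-- Singleton-bound diversity `d_S(R) = 1 + ⌊B (n_t − R/M)⌋`. -/
noncomputable def dS (B nt M : ℕ) (R : ℝ) : ℤ := 1 + ⌊(B : ℝ) * (nt - R / M)⌋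

/-- `b̂ = ⌊d_S/n_t⌋`. -/
noncomputable def bhat (B nt M : ℕ) (R : ℝ) : ℕ := (dS B nt M R).toNat / nt

/-- Theorem 3: optimal rate-diversity tradeoff of the MIMO block-fading channel with
causal mismatched CSIT of delay `u` and quality exponent `δ`:
`d(R,δ) = n_r·n_t·∑_{b=1}^{b̂} a_b + n_r·(d_S − b̂·n_t)·a_{b̂+1}`. -/
noncomputable def dCausal (nt nr B M u : ℕ) (R δ : ℝ) : ℝ :=
  nr * nt * (∑ b ∈ Finset.Icc 1 (bhat B nt M R), aT3 u ((nt : ℝ) * nr) δ b) +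
    nr * ((dS B nt M R : ℝ) - (bhat B nt M R : ℝ) * nt) *
      aT3 u ((nt : ℝ) * nr) δ (bhat B nt M R + 1)

lemma aT3_of_le {u : ℕ} {c δ : ℝ} {b : ℕ} (hb : b ≤ u) : aT3 u c δ b = 1 := by
  cases b with
  | zero => rw [aT3]
  | succ n => rw [aT3, if_pos hb]

lemma aT3_one_le {u : ℕ} {c δ : ℝ} (hδ : 0 < δ) (hc : 0 < c) :
    ∀ b, 1 ≤ aT3 u c δ b := by
  intro b
  induction b using Nat.strong_induction_on with
  | _ b ih =>
    cases b with
    | zero => rw [aT3]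
    | succ n =>
      rw [aT3]
      split
      · exact le_refl 1
      · have h1 : 1 ≤ aT3 u c δ n := ih n (by omega)
        have h2 : 1 ≤ aT3 u c δ (n - (u - 1)) := ih _ (by omega)
        have h3 : 0 < min δ (aT3 u c δ (n - (u - 1))) := lt_min hδ (by linarith)
        nlinarith [mul_pos hc h3]

lemma aT3_one_lt {u : ℕ} {c δ : ℝ} (hδ : 0 < δ) (hc : 0 < c) {b : ℕ} (hub : u < b) :
    1 < aT3 u c δ b := by
  obtain ⟨n, rfl⟩ : ∃ n, b = n + 1 := ⟨b - 1, by omega⟩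
  rw [aT3, if_neg (by omega)]
  have h1 := aT3_one_le hδ hc (u := u) n
  have h2 := aT3_one_le hδ hc (u := u) (n - (u - 1))
  have h3 : 0 < min δ (aT3 u c δ (n - (u - 1))) := lt_min hδ (by linarith)
  nlinarith [mul_pos hc h3]


/-- Causal CSIT of delay `u` gives a strict diversity gain over no CSIT for some
quality exponent `δ > 0` if and only if `R ≤ ((B−u)/B)·M·n_t`, equivalently
`d_S > u·n_t`. -/
theorem causal_gain_iff (nt nr B M u : ℕ)
    (hnt : 0 < nt) (hnr : 0 < nr) (hB : 0 < B) (hM : 0 < M) (hu : 1 ≤ u)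
    (R : ℝ) (hR0 : 0 < R) (hR1 : R < (nt : ℝ) * M) :
    ((∃ δ : ℝ, 0 < δ ∧ dCausal nt nr B M u R δ > nr * (dS B nt M R : ℝ)) ↔
        R ≤ (((B : ℝ) - u) / B) * M * nt) ∧
    (R ≤ (((B : ℝ) - u) / B) * M * nt ↔ (u : ℤ) * nt < dS B nt M R) := by
  have hB' : (0:ℝ) < B := by exact_mod_cast hB
  have hM' : (0:ℝ) < M := by exact_mod_cast hM
  have hnt' : (0:ℝ) < nt := by exact_mod_cast hnt
  have hnr' : (0:ℝ) < nr := by exact_mod_cast hnr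
  have hc : (0:ℝ) < (nt : ℝ) * nr := mul_pos hnt' hnr'
  have hx : 0 < (B:ℝ) * ((nt:ℝ) - R/M) := by
    apply mul_pos hB'
    have : R/M < nt := (div_lt_iff₀ hM').mpr (by linarith)
    linarith
  have hdS1 : 1 ≤ dS B nt M R := by
    unfold dS
    have : (0:ℤ) ≤ ⌊(B:ℝ) * ((nt:ℝ) - R/M)⌋ := Int.floor_nonneg.mpr hx.le
    omega
  set D := dS B nt M R with hD
  set bh := bhat B nt M R with hbh
  set rr := D.toNat % nt with hrr
  have hbh2 : bh = D.toNat / nt := rfl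
  have hDtoNat : (D.toNat : ℤ) = D := Int.toNat_of_nonneg (by omega)
  have hdiv : nt * bh + rr = D.toNat := by rw [hbh2, hrr]; exact Nat.div_add_mod _ _
  have hrlt : rr < nt := Nat.mod_lt _ hnt
  have hDreal : (D:ℝ) = (nt:ℝ) * bh + rr := by
    have h1 : (D:ℝ) = (D.toNat : ℝ) := by exact_mod_cast hDtoNat.symm
    rw [h1, ← hdiv]; push_cast; ring
  -- second iff
  have h2 : R ≤ (((B : ℝ) - u) / B) * M * nt ↔ (u : ℤ) * nt < D := by
    rw [hD]
    unfold dS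
    rw [show ((u:ℤ) * nt < 1 + ⌊(B:ℝ) * ((nt:ℝ) - R/M)⌋ ↔
        (u:ℤ) * nt ≤ ⌊(B:ℝ) * ((nt:ℝ) - R/M)⌋) from by omega]
    rw [Int.le_floor]
    push_cast
    rw [div_mul_eq_mul_div, div_mul_eq_mul_div, le_div_iff₀ hB']
    have e : (B:ℝ) * ((nt:ℝ) - R/M) * M = B * nt * M - B * R := by field_simp
    constructor
    · intro h
      have h' : (u:ℝ) * nt * M ≤ (B:ℝ) * ((nt:ℝ) - R/M) * M := by nlinarith
      rw [e] at h'
      nlinarith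
    · intro h
      have h' : (u:ℝ) * nt * M ≤ (B:ℝ) * ((nt:ℝ) - R/M) * M := by rw [e]; nlinarith
      have := le_of_mul_le_mul_right h' hM'
      linarith
  -- condition in nat form
  have hZN : ((u:ℤ) * nt < D) ↔ u * nt < D.toNat := by
    rw [← hDtoNat]; exact_mod_cast Iff.rfl
  have hcond : ((u:ℤ) * nt < D) ↔ (u < bh ∨ (u = bh ∧ 0 < rr)) := by
    rw [hZN]
    constructor
    · intro h
      have hle : u ≤ bh := by
        rw [hbh2, Nat.le_div_iff_mul_le hnt]; omega
      rcases lt_or_eq_of_le hle with h' | h'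
      · exact Or.inl h'
      · refine Or.inr ⟨h', ?_⟩
        have hd : nt * bh + rr = D.toNat := hdiv
        rw [← h', Nat.mul_comm] at hd
        omega
    · rintro (h | ⟨h, hr⟩)
      · have h1 : u + 1 ≤ bh := h
        rw [hbh2, Nat.le_div_iff_mul_le hnt] at h1
        have hmul : u * nt + nt = (u + 1) * nt := by ring
        omega
      · have hd : nt * bh + rr = D.toNat := hdiv
        rw [← h, Nat.mul_comm] at hd
        omega
  refine ⟨?_, h2⟩
  rw [h2, hcond]
  constructor
  · -- gain → condition
    rintro ⟨δ, hδ, hgain⟩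
    by_contra hnc
    push_neg at hnc
    obtain ⟨hble, himp⟩ := hnc
    have hbhu : bh ≤ u := by omega
    have heq : dCausal nt nr B M u R δ = nr * (D:ℝ) := by
      unfold dCausal
      rw [← hD, ← hbh]
      have hsum : (∑ b ∈ Finset.Icc 1 bh, aT3 u ((nt : ℝ) * nr) δ b) = bh := by
        rw [Finset.sum_congr rfl (fun b hb => aT3_of_le (by
          simp only [Finset.mem_Icc] at hb; omega))]
        simp
      rw [hsum]
      rcases lt_or_eq_of_le hbhu with h' | h'
      · rw [aT3_of_le (by omega)]
        rw [hDreal]; ring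
      · have hr0 : rr = 0 := by
          have := himp h'.symm; omega
        rw [hDreal, hr0]
        push_cast
        ring
    rw [heq] at hgain
    exact lt_irrefl _ hgain
  · -- condition → gain with δ = 1
    intro hcnd
    refine ⟨1, one_pos, ?_⟩
    unfold dCausal
    rw [← hD, ← hbh]
    set A := aT3 u ((nt : ℝ) * nr) 1 (bh + 1) with hA
    set S := ∑ b ∈ Finset.Icc 1 bh, aT3 u ((nt : ℝ) * nr) 1 b with hS
    clear_value A S
    have hA1 : 1 ≤ A := hA ▸ aT3_one_le one_pos hc _
    have hrr0 : (0:ℝ) ≤ rr := by positivity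
    have hwt : (D:ℝ) - (bh:ℝ) * nt = rr := by rw [hDreal]; ring
    rw [hwt, hDreal]
    have hrwt : (0:ℝ) ≤ (nr:ℝ) * rr * (A - 1) :=
      mul_nonneg (mul_nonneg hnr'.le hrr0) (by linarith)
    rcases hcnd with h | ⟨h, hr⟩
    · -- u < bh : sum is strictly bigger than bh
      have hsum : (bh:ℝ) < S := by
        rw [hS]
        have h1 : (∑ _b ∈ Finset.Icc 1 bh, (1:ℝ)) <
            ∑ b ∈ Finset.Icc 1 bh, aT3 u ((nt : ℝ) * nr) 1 b := by
          apply Finset.sum_lt_sum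
          · exact fun i _ => aT3_one_le one_pos hc i
          · exact ⟨bh, Finset.mem_Icc.mpr ⟨by omega, le_refl _⟩, aT3_one_lt one_pos hc h⟩
        simpa [Nat.card_Icc] using h1
      nlinarith [mul_pos hc (sub_pos.mpr hsum), mul_pos hnt' hnr']
    · -- u = bh, rr > 0
      have hsum : (bh:ℝ) ≤ S := by
        rw [hS]
        have h1 : (∑ _b ∈ Finset.Icc 1 bh, (1:ℝ)) ≤
            ∑ b ∈ Finset.Icc 1 bh, aT3 u ((nt : ℝ) * nr) 1 b :=
          Finset.sum_le_sum (fun i _ => aT3_one_le one_pos hc i)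
        simpa [Nat.card_Icc] using h1
      have hA2 : 1 < A := hA ▸ aT3_one_lt one_pos hc (by omega)
      have hrr' : (0:ℝ) < rr := by exact_mod_cast hr
      have e1 : (nr:ℝ) * (nt:ℝ) * (bh:ℝ) ≤ (nr:ℝ) * (nt:ℝ) * S :=
        mul_le_mul_of_nonneg_left hsum (by positivity)
      have e2 : (0:ℝ) < (nr:ℝ) * rr * (A - 1) :=
        mul_pos (mul_pos hnr' hrr') (sub_pos.mpr hA2)
      linarith only [e1, e2]
end

section
/- With the setup of Theorem 3, the diversity d(R,δ) is non-increasing in the delay u: if u' ≥ u ≥ 1 (and the other parameters are fixed) then d computed with delay u' is less than or equal to d computed with delay u. -/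
lemma aT3_eq_one {u : ℕ} {c δ : ℝ} {b : ℕ} (h : b ≤ u) : aT3 u c δ b = 1 := by
  cases b with
  | zero => simp [aT3]
  | succ n => rw [aT3, if_pos h]

lemma one_le_aT3 {u : ℕ} {c δ : ℝ} (hc : 0 ≤ c) (hδ : 0 ≤ δ) : ∀ b, 1 ≤ aT3 u c δ b := by
  intro b
  induction b using Nat.strong_induction_on with
  | _ b ih =>
    cases b with
    | zero => simp [aT3]
    | succ n =>
      rw [aT3]
      split
      · exact le_refl 1
      · have h1 := ih n (by omega)
        have h2 := ih (n - (u - 1)) (by omega)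
        have : 0 ≤ c * min δ (aT3 u c δ (n - (u - 1))) :=
          mul_nonneg hc (le_min hδ (by linarith))
        linarith

lemma aT3_mono {u : ℕ} {c δ : ℝ} (hc : 0 ≤ c) (hδ : 0 ≤ δ) :
    Monotone (aT3 u c δ) := by
  apply monotone_nat_of_le_succ
  intro n
  conv_rhs => rw [aT3]
  split
  · rw [aT3_eq_one (by omega)]
  · have h2 := one_le_aT3 hc hδ (n - (u - 1)) (u := u)
    have : 0 ≤ c * min δ (aT3 u c δ (n - (u - 1))) :=
      mul_nonneg hc (le_min hδ (by linarith))
    linarith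

lemma aT3_anti_u {u u' : ℕ} {c δ : ℝ} (hc : 0 ≤ c) (hδ : 0 ≤ δ)
    (huu' : u ≤ u') : ∀ b, aT3 u' c δ b ≤ aT3 u c δ b := by
  intro b
  induction b using Nat.strong_induction_on with
  | _ b ih =>
    cases b with
    | zero => simp [aT3]
    | succ n =>
      by_cases h' : n + 1 ≤ u'
      · rw [aT3_eq_one h']
        exact one_le_aT3 hc hδ _
      · rw [aT3, aT3, if_neg h', if_neg (show ¬ n + 1 ≤ u by omega)]
        have ih1 : aT3 u' c δ n ≤ aT3 u c δ n := ih n (by omega)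
        have key : aT3 u' c δ (n - (u' - 1)) ≤ aT3 u c δ (n - (u - 1)) :=
          le_trans (aT3_mono hc hδ (by omega)) (ih (n - (u - 1)) (by omega))
        have : min δ (aT3 u' c δ (n - (u' - 1))) ≤ min δ (aT3 u c δ (n - (u - 1))) :=
          min_le_min le_rfl key
        nlinarith

/-- The Theorem 3 diversity is non-increasing in the CSIT delay `u`. -/
theorem dCausal_antitone_in_delay (nt nr B M u u' : ℕ)
    (hnt : 0 < nt) (hnr : 0 < nr) (hB : 0 < B) (hM : 0 < M)
    (hu : 1 ≤ u) (huu' : u ≤ u')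
    (R δ : ℝ) (hR0 : 0 < R) (hR1 : R < (nt : ℝ) * M) (hδ : 0 ≤ δ) :
    dCausal nt nr B M u' R δ ≤ dCausal nt nr B M u R δ := by
  have hc : (0:ℝ) ≤ (nt : ℝ) * nr := by positivity
  have hdS1 : (1:ℤ) ≤ dS B nt M R := by
    have hpos : (0:ℝ) ≤ (B : ℝ) * ((nt:ℝ) - R / M) := by
      apply mul_nonneg (by positivity)
      have : R / M < nt := by
        rw [div_lt_iff₀ (by positivity)]; linarith [hR1]
      linarith
    have : (0:ℤ) ≤ ⌊(B : ℝ) * ((nt:ℝ) - R / M)⌋ := Int.le_floor.mpr (by simpa)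
    unfold dS; omega
  have hrem : (0:ℝ) ≤ (dS B nt M R : ℝ) - (bhat B nt M R : ℝ) * nt := by
    have h1 : (bhat B nt M R) * nt ≤ (dS B nt M R).toNat := Nat.div_mul_le_self _ _
    have h2 : ((dS B nt M R).toNat : ℤ) = dS B nt M R := Int.toNat_of_nonneg (by omega)
    have := (Nat.cast_le (α := ℝ)).mpr h1
    push_cast at this ⊢
    rw [← h2]; push_cast; linarith
  unfold dCausal
  gcongr ?_ + ?_
  · apply mul_le_mul_of_nonneg_left _ (by positivity)
    apply Finset.sum_le_sum
    intro i _
    exact aT3_anti_u hc hδ huu' i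
  · rw [mul_assoc, mul_assoc]
    apply mul_le_mul_of_nonneg_left _ (by positivity : (0:ℝ) ≤ (nr:ℝ))
    calc ((dS B nt M R : ℝ) - (bhat B nt M R : ℝ) * nt) * aT3 u' ((nt : ℝ) * nr) δ (bhat B nt M R + 1)
        ≤ ((dS B nt M R : ℝ) - (bhat B nt M R : ℝ) * nt) * aT3 u ((nt : ℝ) * nr) δ (bhat B nt M R + 1) :=
          mul_le_mul_of_nonneg_left (aT3_anti_u hc hδ huu' _) hrem
      _ = _ := by ring
end
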